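/- Given two inclusion chains G (on G_0, length n+1) and H (on H_0, length m+1), an index function f: [n] → [m] with f(0)=0 and j > i ⟹ f(j)−f(i) ≥ j−i, and a family of total graph homomorphisms φ_i: G_i → H_{f(i)}, the following are equivalent: (1) for every n ≥ j > 0 the square with inclusions G_j ↪ G_0, H_{f(j)} ↪ H_0 and maps φ_j, φ_0 is a pullback in the category of graphs; (2) (φ,f) is a closed typing chain morphism, i.e., for all n ≥ j > i ≥ 0 the square with inclusions G_j ∩ G_i ↪ G_i, H_{f(j)} ∩ H_{f(i)} ↪ H_{f(i)} and maps φ_{j|i}, φ_i is a pullback, and likewise the square with inclusions into G_j and H_{f(j)} is a pullback. -/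

import Mathlib

/-- A directed multigraph. -/
structure DGraph where
  N : Type
  A : Type
  src : A → N
  tgt : A → N

/-- A (total) graph homomorphism. -/
structure GraphHom (G H : DGraph) where
  fN : G.N → H.N
  fA : G.A → H.A
  src_comm : ∀ a, H.src (fA a) = fN (G.src a)
  tgt_comm : ∀ a, H.tgt (fA a) = fN (G.tgt a)

/-- A subgraph, given by node and arrow sets closed under source and target. -/
structure Subgraph (G : DGraph) where
  nodes : Set G.N
  arrows : Set G.A
  src_mem : ∀ a ∈ arrows, G.src a ∈ nodes
  tgt_mem : ∀ a ∈ arrows, G.tgt a ∈ nodes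

/-- The graph realizing a subgraph. -/
def Subgraph.toGraph {G : DGraph} (X : Subgraph G) : DGraph where
  N := {x // x ∈ X.nodes}
  A := {a // a ∈ X.arrows}
  src := fun a => ⟨G.src a.1, X.src_mem a.1 a.2⟩
  tgt := fun a => ⟨G.tgt a.1, X.tgt_mem a.1 a.2⟩

/-- Subgraph inclusion order. -/
def Subgraph.le {G : DGraph} (X Y : Subgraph G) : Prop :=
  X.nodes ⊆ Y.nodes ∧ X.arrows ⊆ Y.arrows

/-- Intersection of subgraphs. -/
def Subgraph.inter {G : DGraph} (X Y : Subgraph G) : Subgraph G where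
  nodes := X.nodes ∩ Y.nodes
  arrows := X.arrows ∩ Y.arrows
  src_mem := fun a ha => ⟨X.src_mem a ha.1, Y.src_mem a ha.2⟩
  tgt_mem := fun a ha => ⟨X.tgt_mem a ha.1, Y.tgt_mem a ha.2⟩

/-- The full subgraph. -/
def Subgraph.top (G : DGraph) : Subgraph G :=
  ⟨Set.univ, Set.univ, fun _ _ => trivial, fun _ _ => trivial⟩

/-- A partial graph homomorphism `G ⇀ H`: a subgraph `dom ⊑ G` (the domain of
definition) together with a total graph homomorphism `dom → H`. -/
structure PGraphHom (G H : DGraph) where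
  dom : Subgraph G
  fN : ∀ x, x ∈ dom.nodes → H.N
  fA : ∀ a, a ∈ dom.arrows → H.A
  src_comm : ∀ a (ha : a ∈ dom.arrows),
    H.src (fA a ha) = fN (G.src a) (dom.src_mem a ha)
  tgt_comm : ∀ a (ha : a ∈ dom.arrows),
    H.tgt (fA a ha) = fN (G.tgt a) (dom.tgt_mem a ha)

/-- A partial graph homomorphism is total if its domain of definition is everything. -/
def PGraphHom.Total {G H : DGraph} (φ : PGraphHom G H) : Prop :=
  φ.dom.nodes = Set.univ ∧ φ.dom.arrows = Set.univ

theorem PGraphHom.fN_congr {G H : DGraph} (φ : PGraphHom G H) {x y : G.N}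
    (hx : x ∈ φ.dom.nodes) (hy : y ∈ φ.dom.nodes) (h : x = y) :
    φ.fN x hx = φ.fN y hy := by subst h; rfl

/-- Domain of definition of the composite: the preimage of `dom ψ` under `φ`. -/
def PGraphHom.domComp {G H K : DGraph} (φ : PGraphHom G H) (ψ : PGraphHom H K) :
    Subgraph G where
  nodes := {x | ∃ h : x ∈ φ.dom.nodes, φ.fN x h ∈ ψ.dom.nodes}
  arrows := {a | ∃ h : a ∈ φ.dom.arrows, φ.fA a h ∈ ψ.dom.arrows}
  src_mem := fun a ha => ⟨φ.dom.src_mem a ha.choose, by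
    rw [← φ.src_comm a ha.choose]
    exact ψ.dom.src_mem _ ha.choose_spec⟩
  tgt_mem := fun a ha => ⟨φ.dom.tgt_mem a ha.choose, by
    rw [← φ.tgt_comm a ha.choose]
    exact ψ.dom.tgt_mem _ ha.choose_spec⟩

/-- Composition of partial graph homomorphisms. -/
def PGraphHom.comp {G H K : DGraph} (φ : PGraphHom G H) (ψ : PGraphHom H K) :
    PGraphHom G K where
  dom := φ.domComp ψ
  fN := fun x hx => ψ.fN (φ.fN x hx.choose) hx.choose_spec
  fA := fun a ha => ψ.fA (φ.fA a ha.choose) ha.choose_spec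
  src_comm := fun a ha =>
    (ψ.src_comm _ ha.choose_spec).trans
      (ψ.fN_congr _ _ (φ.src_comm a ha.choose))
  tgt_comm := fun a ha =>
    (ψ.tgt_comm _ ha.choose_spec).trans
      (ψ.fN_congr _ _ (φ.tgt_comm a ha.choose))

/-- The order `φ ⪯ ψ`: `dom φ ⊑ dom ψ` and agreement on `dom φ`. -/
def PGraphHom.le {G H : DGraph} (φ ψ : PGraphHom G H) : Prop :=
  φ.dom.le ψ.dom ∧
  (∀ x (hx : x ∈ φ.dom.nodes) (hx' : x ∈ ψ.dom.nodes), φ.fN x hx = ψ.fN x hx') ∧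
  (∀ a (ha : a ∈ φ.dom.arrows) (ha' : a ∈ ψ.dom.arrows), φ.fA a ha = ψ.fA a ha')

/-- Regarding a total graph homomorphism as a partial one. -/
def GraphHom.toP {G H : DGraph} (f : GraphHom G H) : PGraphHom G H where
  dom := Subgraph.top G
  fN := fun x _ => f.fN x
  fA := fun a _ => f.fA a
  src_comm := fun a _ => f.src_comm a
  tgt_comm := fun a _ => f.tgt_comm a

/-- Composition of total graph homomorphisms. -/
def GraphHom.comp {G H K : DGraph} (f : GraphHom G H) (g : GraphHom H K) :
    GraphHom G K where
  fN := fun x => g.fN (f.fN x)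
  fA := fun a => g.fA (f.fA a)
  src_comm := fun a => (g.src_comm _).trans (congrArg g.fN (f.src_comm a))
  tgt_comm := fun a => (g.tgt_comm _).trans (congrArg g.fN (f.tgt_comm a))

/-! Pullbacks of subgraphs along a graph homomorphism are preimages, and preimages commute
with intersections. So if every `G j` is the preimage of `H (f j)` under `φ`, then
`G j ∩ G i` is the preimage of `H (f j) ∩ H (f i)`, and both closedness squares follow.
Conversely, the closedness squares at `i = 0`, where `G 0` and `H (f 0) = H 0` are the whole
graphs, are exactly the level-zero pullback squares. -/

theorem Set.inter_eq_inter_preimage_inter {α β : Type*} {g : α → β} {s t : Set α}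
    {u v : Set β} (hs : s = g ⁻¹' u) (ht : t = g ⁻¹' v) :
    s ∩ t = t ∩ g ⁻¹' (u ∩ v) ∧ s ∩ t = s ∩ g ⁻¹' (u ∩ v) := by
  subst hs ht
  rw [Set.preimage_inter]
  exact ⟨(Set.inter_eq_right.2 Set.inter_subset_right).symm,
    (Set.inter_eq_right.2 Set.inter_subset_left).symm⟩

namespace Subgraph

variable {G H : DGraph}

def IsPreimage (φ : GraphHom G H) (X : Subgraph G) (Y : Subgraph H) : Prop :=
  X.nodes = φ.fN ⁻¹' Y.nodes ∧ X.arrows = φ.fA ⁻¹' Y.arrows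

/-- With `X = G j`, `X' = G i`, `Y = H (f j)`, `Y' = H (f i)`: closedness of `(φ, f)` at `j > i`. -/
def ClosedSquares (φ : GraphHom G H) (X X' : Subgraph G) (Y Y' : Subgraph H) : Prop :=
  X.nodes ∩ X'.nodes = X'.nodes ∩ φ.fN ⁻¹' (Y.nodes ∩ Y'.nodes) ∧
  X.arrows ∩ X'.arrows = X'.arrows ∩ φ.fA ⁻¹' (Y.arrows ∩ Y'.arrows) ∧
  X.nodes ∩ X'.nodes = X.nodes ∩ φ.fN ⁻¹' (Y.nodes ∩ Y'.nodes) ∧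
  X.arrows ∩ X'.arrows = X.arrows ∩ φ.fA ⁻¹' (Y.arrows ∩ Y'.arrows)

variable {φ : GraphHom G H} {X X' : Subgraph G} {Y Y' : Subgraph H}

theorem isPreimage_of_univ (hX : X.nodes = Set.univ ∧ X.arrows = Set.univ)
    (hY : Y.nodes = Set.univ ∧ Y.arrows = Set.univ) : IsPreimage φ X Y := by
  simp only [IsPreimage, hX, hY, Set.preimage_univ, and_self]

theorem IsPreimage.closedSquares (h : IsPreimage φ X Y) (h' : IsPreimage φ X' Y') :
    ClosedSquares φ X X' Y Y' := by
  obtain ⟨hN, hN'⟩ := Set.inter_eq_inter_preimage_inter h.1 h'.1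
  obtain ⟨hA, hA'⟩ := Set.inter_eq_inter_preimage_inter h.2 h'.2
  exact ⟨hN, hA, hN', hA'⟩

theorem ClosedSquares.isPreimage_of_univ (h : ClosedSquares φ X X' Y Y')
    (hX' : X'.nodes = Set.univ ∧ X'.arrows = Set.univ)
    (hY' : Y'.nodes = Set.univ ∧ Y'.arrows = Set.univ) : IsPreimage φ X Y := by
  obtain ⟨hN, hA, -⟩ := h
  simp only [hX', hY', Set.inter_univ, Set.univ_inter] at hN hA
  exact ⟨hN, hA⟩

end Subgraph

open Subgraph in
/-- The family `φ i : G i → H (f i)` is encoded by the single homomorphism `φ : G 0 → H 0`,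
of which the `φ i` are restrictions. -/
theorem level_zero_pullbacks_iff_closed_general {n m : ℕ} {G0 H0 : DGraph}
    (Gs : Fin (n+1) → Subgraph G0) (Hs : Fin (m+1) → Subgraph H0)
    (hG0 : (Gs 0).nodes = Set.univ ∧ (Gs 0).arrows = Set.univ)
    (hH0 : (Hs 0).nodes = Set.univ ∧ (Hs 0).arrows = Set.univ)
    (f : Fin (n+1) → Fin (m+1)) (hf0 : f 0 = 0)
    (φ : GraphHom G0 H0) :
    (∀ j : Fin (n+1), (0 : Fin (n+1)) < j →
      (Gs j).nodes = φ.fN ⁻¹' (Hs (f j)).nodes ∧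
      (Gs j).arrows = φ.fA ⁻¹' (Hs (f j)).arrows)
    ↔
    (∀ j i : Fin (n+1), i < j →
      ((Gs j).nodes ∩ (Gs i).nodes =
        (Gs i).nodes ∩ (φ.fN ⁻¹' ((Hs (f j)).nodes ∩ (Hs (f i)).nodes)) ∧
       (Gs j).arrows ∩ (Gs i).arrows =
        (Gs i).arrows ∩ (φ.fA ⁻¹' ((Hs (f j)).arrows ∩ (Hs (f i)).arrows)) ∧
       (Gs j).nodes ∩ (Gs i).nodes =
        (Gs j).nodes ∩ (φ.fN ⁻¹' ((Hs (f j)).nodes ∩ (Hs (f i)).nodes)) ∧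
       (Gs j).arrows ∩ (Gs i).arrows =
        (Gs j).arrows ∩ (φ.fA ⁻¹' ((Hs (f j)).arrows ∩ (Hs (f i)).arrows)))) := by
  have hHf0 : (Hs (f 0)).nodes = Set.univ ∧ (Hs (f 0)).arrows = Set.univ := hf0 ▸ hH0
  constructor
  · intro h j i _
    have preimage (k : Fin (n+1)) : IsPreimage φ (Gs k) (Hs (f k)) := by
      rcases (Fin.zero_le k).eq_or_lt with rfl | hk
      exacts [isPreimage_of_univ hG0 hHf0, h k hk]
    exact (preimage j).closedSquares (preimage i)
  · intro h j hj
    exact ClosedSquares.isPreimage_of_univ (h j 0 hj) hG0 hHf0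

/-- Given inclusion chains `Gs` (on `G0`, length `n+1`) and `Hs`
(on `H0`, length `m+1`), an index function `f` with `f 0 = 0` and
`j > i ⟹ f j − f i ≥ j − i`, and a family of total graph homomorphisms
`φ i : Gs i → Hs (f i)` — encoded by a single homomorphism `φ : G0 → H0`
mapping each `Gs i` into `Hs (f i)` — the following are equivalent:
(1) for every `j > 0`, `Gs j` is the preimage of `Hs (f j)` under `φ = φ 0`
(the level-0 squares are pullbacks in `Graph`);
(2) `(φ, f)` is a closed typing chain morphism, i.e. for all `j > i` the two
squares with the intersection inclusions `Gs j ∩ Gs i ↪ Gs i`,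
`Hs (f j) ∩ Hs (f i) ↪ Hs (f i)` (resp. into `Gs j`, `Hs (f j)`) are pullbacks. -/
theorem level_zero_pullbacks_iff_closed {n m : ℕ} {G0 H0 : DGraph}
    (Gs : Fin (n+1) → Subgraph G0) (Hs : Fin (m+1) → Subgraph H0)
    (hG0 : (Gs 0).nodes = Set.univ ∧ (Gs 0).arrows = Set.univ)
    (hH0 : (Hs 0).nodes = Set.univ ∧ (Hs 0).arrows = Set.univ)
    (f : Fin (n+1) → Fin (m+1)) (hf0 : f 0 = 0)
    (hf : ∀ i j : Fin (n+1), i < j → (f i : ℕ) + ((j : ℕ) - (i : ℕ)) ≤ (f j : ℕ))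
    (φ : GraphHom G0 H0)
    (hmapsN : ∀ i : Fin (n+1), ∀ x ∈ (Gs i).nodes, φ.fN x ∈ (Hs (f i)).nodes)
    (hmapsA : ∀ i : Fin (n+1), ∀ a ∈ (Gs i).arrows, φ.fA a ∈ (Hs (f i)).arrows) :
    (∀ j : Fin (n+1), (0 : Fin (n+1)) < j →
      (Gs j).nodes = φ.fN ⁻¹' (Hs (f j)).nodes ∧
      (Gs j).arrows = φ.fA ⁻¹' (Hs (f j)).arrows)
    ↔
    (∀ j i : Fin (n+1), i < j →
      ((Gs j).nodes ∩ (Gs i).nodes =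
        (Gs i).nodes ∩ (φ.fN ⁻¹' ((Hs (f j)).nodes ∩ (Hs (f i)).nodes)) ∧
       (Gs j).arrows ∩ (Gs i).arrows =
        (Gs i).arrows ∩ (φ.fA ⁻¹' ((Hs (f j)).arrows ∩ (Hs (f i)).arrows)) ∧
       (Gs j).nodes ∩ (Gs i).nodes =
        (Gs j).nodes ∩ (φ.fN ⁻¹' ((Hs (f j)).nodes ∩ (Hs (f i)).nodes)) ∧
       (Gs j).arrows ∩ (Gs i).arrows =
        (Gs j).arrows ∩ (φ.fA ⁻¹' ((Hs (f j)).arrows ∩ (Hs (f i)).arrows)))) :=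
  level_zero_pullbacks_iff_closed_general Gs Hs hG0 hH0 f hf0 φ
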